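/- arXiv:1201.2462 — 2 statements merged into one kernel-verified Lean document; each statement's English description precedes it below -/
import Mathlib

section
/- If X ⊆ ℝⁿ is a convex set containing the origin, then the volume ratio vr(X,r) = (vol(X ∩ B(0,r)) / vol(B(0,r)))^(1/n) is non-increasing in r > 0. -/
open MeasureTheory Metric Pointwise

/-- For a convex set `X ⊆ ℝⁿ` containing the origin, the volume ratio
`vr(X,r) = (vol(X ∩ B(0,r)) / vol(B(0,r)))^(1/n)` is non-increasing in `r > 0`. -/
theorem volume_ratio_antitone {n : ℕ} (X : Set (EuclideanSpace ℝ (Fin n)))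
    (hX : Convex ℝ X) (h0 : (0 : EuclideanSpace ℝ (Fin n)) ∈ X) :
    ∀ r s : ℝ, 0 < r → r ≤ s →
      ((volume (X ∩ closedBall 0 s)).toReal /
          (volume (closedBall (0 : EuclideanSpace ℝ (Fin n)) s)).toReal) ^ ((1 : ℝ) / n) ≤
      ((volume (X ∩ closedBall 0 r)).toReal /
          (volume (closedBall (0 : EuclideanSpace ℝ (Fin n)) r)).toReal) ^ ((1 : ℝ) / n) := by
  intro r s hr hrs
  rcases Nat.eq_zero_or_pos n with hn | hn
  · subst hn
    simp
  have hs : 0 < s := hr.trans_le hrs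
  set t : ℝ := r / s with ht
  have ht0 : 0 < t := div_pos hr hs
  have ht1 : t ≤ 1 := (div_le_one hs).mpr hrs
  have hfin : Module.finrank ℝ (EuclideanSpace ℝ (Fin n)) = n :=
    finrank_euclideanSpace_fin
  -- subset
  have hsub : t • (X ∩ closedBall 0 s) ⊆ X ∩ closedBall (0 : EuclideanSpace ℝ (Fin n)) r := by
    rintro _ ⟨x, ⟨hxX, hxB⟩, rfl⟩
    constructor
    · have := hX h0 hxX (by linarith : (0:ℝ) ≤ 1 - t) ht0.le (by ring)
      rw [smul_zero, zero_add] at this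
      exact this
    · rw [mem_closedBall_zero_iff] at hxB ⊢
      rw [norm_smul, Real.norm_eq_abs, abs_of_pos ht0]
      calc t * ‖x‖ ≤ t * s := by nlinarith [norm_nonneg x]
        _ = r := div_mul_cancel₀ r hs.ne'
  -- volume scaling for smul
  have hsmul : volume (t • (X ∩ closedBall (0 : EuclideanSpace ℝ (Fin n)) s))
      = ENNReal.ofReal (t ^ n) * volume (X ∩ closedBall 0 s) := by
    rw [Measure.addHaar_smul, hfin, abs_of_pos (pow_pos ht0 n)]
  have hvol_le : ENNReal.ofReal (t ^ n) * volume (X ∩ closedBall 0 s)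
      ≤ volume (X ∩ closedBall (0 : EuclideanSpace ℝ (Fin n)) r) := by
    rw [← hsmul]; exact measure_mono hsub
  -- volumes of balls
  have hBr : volume (closedBall (0 : EuclideanSpace ℝ (Fin n)) r)
      = ENNReal.ofReal (t ^ n) * volume (closedBall (0 : EuclideanSpace ℝ (Fin n)) s) := by
    have h1 := Measure.addHaar_closedBall (volume : Measure (EuclideanSpace ℝ (Fin n))) 0 hr.le
    have h2 := Measure.addHaar_closedBall (volume : Measure (EuclideanSpace ℝ (Fin n))) 0 hs.le
    rw [h1, h2, hfin, ← mul_assoc, ← ENNReal.ofReal_mul (by positivity)]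
    congr 2
    rw [ht, div_pow, div_mul_cancel₀]
    positivity
  -- positivity / finiteness
  have hBrpos : 0 < (volume (closedBall (0 : EuclideanSpace ℝ (Fin n)) r)).toReal := by
    apply ENNReal.toReal_pos (measure_closedBall_pos volume 0 hr).ne'
      measure_closedBall_lt_top.ne
  have hBspos : 0 < (volume (closedBall (0 : EuclideanSpace ℝ (Fin n)) s)).toReal := by
    apply ENNReal.toReal_pos (measure_closedBall_pos volume 0 hs).ne'
      measure_closedBall_lt_top.ne
  have hXsfin : volume (X ∩ closedBall (0 : EuclideanSpace ℝ (Fin n)) s) < ⊤ :=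
    lt_of_le_of_lt (measure_mono Set.inter_subset_right) measure_closedBall_lt_top
  have hXrfin : volume (X ∩ closedBall (0 : EuclideanSpace ℝ (Fin n)) r) < ⊤ :=
    lt_of_le_of_lt (measure_mono Set.inter_subset_right) measure_closedBall_lt_top
  -- pass to reals
  have hA : t ^ n * (volume (X ∩ closedBall (0 : EuclideanSpace ℝ (Fin n)) s)).toReal
      ≤ (volume (X ∩ closedBall (0 : EuclideanSpace ℝ (Fin n)) r)).toReal := by
    have := ENNReal.toReal_mono hXrfin.ne hvol_le
    rwa [ENNReal.toReal_mul, ENNReal.toReal_ofReal (by positivity)] at this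
  have hB : (volume (closedBall (0 : EuclideanSpace ℝ (Fin n)) r)).toReal
      = t ^ n * (volume (closedBall (0 : EuclideanSpace ℝ (Fin n)) s)).toReal := by
    rw [hBr, ENNReal.toReal_mul, ENNReal.toReal_ofReal (by positivity)]
  have htn : 0 < t ^ n := by positivity
  have hdiv : (volume (X ∩ closedBall 0 s)).toReal /
        (volume (closedBall (0 : EuclideanSpace ℝ (Fin n)) s)).toReal ≤
      (volume (X ∩ closedBall 0 r)).toReal /
        (volume (closedBall (0 : EuclideanSpace ℝ (Fin n)) r)).toReal := by
    rw [div_le_div_iff₀ hBspos hBrpos, hB]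
    nlinarith [ENNReal.toReal_nonneg (a := volume (X ∩ closedBall (0 : EuclideanSpace ℝ (Fin n)) s)),
      hBspos]
  exact Real.rpow_le_rpow (by positivity) hdiv (by positivity)
end

section
/- If g is a standard Gaussian vector in ℝ^k and r = √(2k·ln(1/(2c))) with 0 < c ≤ 0.2, then P(‖g‖₂ > r) ≤ (2c·√(2e·ln(1/(2c))))^k ≤ 2c·√(2e·ln(1/(2c))), and hence P(‖g‖₂ ≤ r) ≥ 0.1. -/
/-!
Chernoff: with `E[exp (t g²)] = (1 - 2t)^{-1/2}` and the optimal `t`, the chi-squared tail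
`P(‖g‖² ≥ k u)` is at most `(u e^{1-u})^{k/2}`; for `u = 2 log (1/(2c))` the base equals
`B = 2c √(2e log (1/(2c)))`. Since `s ↦ s² log (1/s)` increases on `(0, e^{-1/2}]`, the worst case
is `2c = 0.4`, giving `B ≤ 0.9`; hence `B^k ≤ B` and `P(‖g‖ ≤ r) ≥ 1 - B ≥ 0.1`.
-/

open MeasureTheory ProbabilityTheory Real

section Pi

variable {ι E : Type*} [Fintype ι] {mE : MeasurableSpace E} {μ : Measure E} [SigmaFinite μ]

lemma exp_mul_sum_eq_prod (f : E → ℝ) (t : ℝ) (x : ι → E) :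
    exp (t * ∑ i, f (x i)) = ∏ i, exp (t * f (x i)) := by
  rw [Finset.mul_sum, exp_sum]

lemma integrable_exp_mul_sum_pi {f : E → ℝ} {t : ℝ}
    (hf : Integrable (fun x ↦ exp (t * f x)) μ) :
    Integrable (fun x : ι → E ↦ exp (t * ∑ i, f (x i))) (Measure.pi fun _ ↦ μ) := by
  simp_rw [exp_mul_sum_eq_prod]
  exact Integrable.fintype_prod fun _ ↦ hf

lemma mgf_sum_pi (f : E → ℝ) (t : ℝ) :
    mgf (fun x : ι → E ↦ ∑ i, f (x i)) (Measure.pi fun _ ↦ μ) t = mgf f μ t ^ Fintype.card ι := by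
  simp_rw [mgf, exp_mul_sum_eq_prod]
  exact integral_fintype_prod_eq_pow (fun y ↦ exp (t * f y))

end Pi

lemma mgf_sq_gaussianReal {t : ℝ} (ht : t < 1 / 2) :
    mgf (fun x ↦ x ^ 2) (gaussianReal 0 1) t = (√(1 - 2 * t))⁻¹ := by
  have hb : 0 < 1 / 2 - t := by linarith
  have hdensity : ∀ x : ℝ, gaussianPDFReal 0 1 x • exp (t * x ^ 2)
      = (√(2 * π))⁻¹ * exp (-(1 / 2 - t) * x ^ 2) := by
    intro x
    rw [gaussianPDFReal, smul_eq_mul, mul_assoc, ← exp_add]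
    push_cast
    ring_nf
  rw [mgf, integral_gaussianReal_eq_integral_smul one_ne_zero]
  simp_rw [hdensity]
  rw [integral_const_mul, integral_gaussian, ← sqrt_inv, ← sqrt_inv, ← sqrt_mul (by positivity)]
  congr 1
  field_simp

lemma integrable_exp_mul_sq_gaussianReal {t : ℝ} (ht : t < 1 / 2) :
    Integrable (fun x ↦ exp (t * x ^ 2)) (gaussianReal 0 1) := by
  rw [← mgf_pos_iff, mgf_sq_gaussianReal ht, inv_pos, sqrt_pos]
  linarith

theorem measureReal_card_mul_le_sum_sq_le {ι : Type*} [Fintype ι] {u : ℝ} (hu : 1 ≤ u) :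
    (Measure.pi fun _ : ι ↦ gaussianReal 0 1).real {x | Fintype.card ι * u ≤ ∑ i, x i ^ 2}
      ≤ √(u * exp (1 - u)) ^ Fintype.card ι := by
  -- the optimal Chernoff parameter `t`, for which `1 - 2 t = u⁻¹`
  set t := (1 - u⁻¹) / 2
  have ht0 : 0 ≤ t := by
    have : u⁻¹ ≤ 1 := inv_le_one_of_one_le₀ hu
    simp only [t]; linarith
  have ht : t < 1 / 2 := by
    have : 0 < u⁻¹ := by positivity
    simp only [t]; linarith
  calc _ ≤ exp (-t * (Fintype.card ι * u)) *
          mgf (fun x : ι → ℝ ↦ ∑ i, x i ^ 2) (Measure.pi fun _ ↦ gaussianReal 0 1) t :=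
        measure_ge_le_exp_mul_mgf _ ht0
          (integrable_exp_mul_sum_pi (integrable_exp_mul_sq_gaussianReal ht))
    _ = (exp (-t * u) * (√(1 - 2 * t))⁻¹) ^ Fintype.card ι := by
        rw [mgf_sum_pi (fun x ↦ x ^ 2), mgf_sq_gaussianReal ht, mul_pow, ← exp_nat_mul]
        ring_nf
    _ = √(u * exp (1 - u)) ^ Fintype.card ι := by
        have hu0 : u ≠ 0 := by positivity
        congr 1
        rw [show 1 - 2 * t = u⁻¹ by simp only [t]; ring, sqrt_inv, inv_inv,
          show -t * u = (1 - u) / 2 by simp only [t]; field_simp; ring, exp_half,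
          sqrt_mul (by positivity), mul_comm]

lemma sq_mul_log_one_div_le {s a : ℝ} (hs : 0 < s) (hsa : s ≤ a) (ha : 1 / 2 ≤ log (1 / a)) :
    s ^ 2 * log (1 / s) ≤ a ^ 2 * log (1 / a) := by
  have ha0 : 0 < a := hs.trans_le hsa
  -- the tangent line of `log` at `1` bounds `log (a / s)`
  have hlog : log (1 / s) ≤ log (1 / a) + a / s - 1 := by
    have h := log_le_sub_one_of_pos (div_pos ha0 hs)
    rw [log_div ha0.ne' hs.ne'] at h
    rw [one_div, one_div, log_inv, log_inv]
    linarith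
  have hs2 : s ^ 2 * (a / s) = a * s := by field_simp
  calc s ^ 2 * log (1 / s) ≤ s ^ 2 * (log (1 / a) + a / s - 1) := by gcongr
    _ = s ^ 2 * log (1 / a) + a * s - s ^ 2 := by rw [← hs2]; ring
    _ ≤ a ^ 2 * log (1 / a) := by
        have h : 0 ≤ a * log (1 / a) + s * (log (1 / a) - 1) := by nlinarith
        nlinarith [mul_nonneg (sub_nonneg.2 hsa) h]

lemma one_half_lt_log_five_halves : 1 / 2 < log (5 / 2) := by
  rw [lt_log_iff_exp_lt (by norm_num)]
  have h : exp (1 / 2) ^ 2 = exp 1 := by rw [← exp_nat_mul]; norm_num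
  nlinarith [exp_one_lt_d9, exp_pos (1 / 2)]

lemma log_five_halves_lt : log (5 / 2) < 0.92 := by
  rw [log_lt_iff_lt_exp (by norm_num)]
  have h : exp 0.92 = exp 1 * exp (-0.08) := by rw [← exp_add]; norm_num
  nlinarith [exp_one_gt_d9, add_one_le_exp (-0.08), exp_pos (-0.08)]

lemma two_mul_mul_sqrt_two_mul_exp_one_mul_log_le {c : ℝ} (hc : 0 < c) (hc' : c ≤ 0.2) :
    2 * c * √(2 * exp 1 * log (1 / (2 * c))) ≤ 0.9 := by
  have hlog : (2 * c) ^ 2 * log (1 / (2 * c)) ≤ 0.4 ^ 2 * log (5 / 2) := by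
    have h52 : (1 : ℝ) / 0.4 = 5 / 2 := by norm_num
    have h := sq_mul_log_one_div_le (s := 2 * c) (a := 0.4) (by positivity) (by linarith)
      (by rw [h52]; exact one_half_lt_log_five_halves.le)
    rwa [h52] at h
  have hL : 0 ≤ log (1 / (2 * c)) := log_nonneg (by rw [le_div_iff₀ (by positivity)]; linarith)
  have hsq : (2 * c * √(2 * exp 1 * log (1 / (2 * c)))) ^ 2
      = 2 * exp 1 * ((2 * c) ^ 2 * log (1 / (2 * c))) := by
    rw [mul_pow, sq_sqrt (by positivity)]; ring
  nlinarith [exp_one_lt_d9, exp_pos 1, log_five_halves_lt, one_half_lt_log_five_halves]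

lemma sqrt_two_mul_log_mul_exp_one_sub {s : ℝ} (hs : 0 < s) :
    √(2 * log (1 / s) * exp (1 - 2 * log (1 / s))) = s * √(2 * exp 1 * log (1 / s)) := by
  have hexp : exp (1 - 2 * log (1 / s)) = exp 1 * s ^ 2 := by
    rw [one_div, log_inv, show 1 - 2 * -log s = 1 + log s + log s by ring, exp_add, exp_add,
      exp_log hs]
    ring
  rw [hexp, show 2 * log (1 / s) * (exp 1 * s ^ 2) = s ^ 2 * (2 * exp 1 * log (1 / s)) by ring,
    sqrt_mul (by positivity), sqrt_sq hs.le]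

/-- If `g` is a standard Gaussian vector in `ℝ^k` and
`r = √(2k·ln(1/(2c)))` with `0 < c ≤ 0.2`, then
`P(‖g‖₂ > r) ≤ (2c·√(2e·ln(1/(2c))))^k ≤ 2c·√(2e·ln(1/(2c)))`, and hence
`P(‖g‖₂ ≤ r) ≥ 0.1`. -/
theorem gaussian_tail_bound {k : ℕ} (hk : 1 ≤ k) (c : ℝ) (hc : 0 < c) (hc' : c ≤ 0.2)
    (r : ℝ) (hr : r = Real.sqrt (2 * k * Real.log (1 / (2 * c)))) :
    ((Measure.pi fun _ : Fin k => gaussianReal 0 1)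
        {g : Fin k → ℝ | r < Real.sqrt (∑ i, g i ^ 2)}).toReal ≤
      (2 * c * Real.sqrt (2 * Real.exp 1 * Real.log (1 / (2 * c)))) ^ k ∧
    (2 * c * Real.sqrt (2 * Real.exp 1 * Real.log (1 / (2 * c)))) ^ k ≤
      2 * c * Real.sqrt (2 * Real.exp 1 * Real.log (1 / (2 * c))) ∧
    0.1 ≤ ((Measure.pi fun _ : Fin k => gaussianReal 0 1)
        {g : Fin k → ℝ | Real.sqrt (∑ i, g i ^ 2) ≤ r}).toReal := by
  set L := log (1 / (2 * c))
  set B := 2 * c * √(2 * exp 1 * L)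
  have hL : 1 / 2 ≤ L := one_half_lt_log_five_halves.le.trans <|
    log_le_log (by norm_num) (by rw [le_div_iff₀ (by positivity)]; linarith)
  have hB : B ≤ 0.9 := two_mul_mul_sqrt_two_mul_exp_one_mul_log_le hc hc'
  have hsub : {g : Fin k → ℝ | r < √(∑ i, g i ^ 2)} ⊆ {g | k * (2 * L) ≤ ∑ i, g i ^ 2} := by
    intro g hg
    have hr2 : r ^ 2 = k * (2 * L) := by rw [hr, sq_sqrt (by positivity)]; ring
    rw [Set.mem_ofPred_eq, lt_sqrt (by rw [hr]; positivity), hr2] at hg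
    exact hg.le
  have htail : (Measure.pi fun _ : Fin k ↦ gaussianReal 0 1).real
      {g | r < √(∑ i, g i ^ 2)} ≤ B ^ k := by
    have h := measureReal_card_mul_le_sum_sq_le (ι := Fin k) (u := 2 * L) (by linarith)
    rw [Fintype.card_fin, sqrt_two_mul_log_mul_exp_one_sub (by positivity)] at h
    exact (measureReal_mono hsub).trans h
  have hBk : B ^ k ≤ B := pow_le_of_le_one (by positivity) (by linarith) (by omega)
  refine ⟨htail, hBk, ?_⟩
  have hcompl : {g : Fin k → ℝ | √(∑ i, g i ^ 2) ≤ r} = {g | r < √(∑ i, g i ^ 2)}ᶜ := by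
    ext g; simp [not_lt]
  rw [← measureReal_def, hcompl,
    probReal_compl_eq_one_sub (measurableSet_lt (by fun_prop) (by fun_prop))]
  linarith
end
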